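/- For every constant c₁ > 0 there is a constant C > 0 such that for all sufficiently large positive integers N the following holds. Let β be an integer with 1 < |β| ≤ N, and for each integer α let 𝒫(α) be the set of primes q ∈ (√N/2, √N] with Legendre symbol (β|q) = 1 such that α is a primitive root modulo q. Then the number of integers α ∈ [-N, N] with #𝒫(α) > c₁·√N/log N but v_q(α^{q-1} - 1) > 1 for every q ∈ 𝒫(α) is at most C · N^{1/2}. -/

import Mathlib

/-- The Legendre symbol `(a | p)` for a natural number `p` (defined to be `0` if `p` is not
prime). -/
noncomputable def legSym (p : ℕ) (a : ℤ) : ℤ :=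
  if hp : p.Prime then
    haveI : Fact p.Prime := ⟨hp⟩
    legendreSym p a
  else 0

/-- `primRootSet N β α` is the set of primes `q ∈ (√N/2, √N]` with `(β|q) = 1` such that `α`
is a primitive root modulo `q`. -/
def primRootSet (N : ℕ) (β α : ℤ) : Set ℕ :=
  {q : ℕ | q.Prime ∧ Real.sqrt N / 2 < (q : ℝ) ∧ (q : ℝ) ≤ Real.sqrt N ∧
    legSym q β = 1 ∧ orderOf ((α : ZMod q)) = q - 1}

/-!
If `q² ∣ α^(q-1) - 1`, then `α` is determined modulo `q²` by its residue modulo `q` (Hensel: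
the derivative `(q-1) α^(q-2)` of `X^(q-1) - 1` is a unit modulo `q`). So for a prime
`q ∈ (√N/2, √N]` at most `8q ≤ 8√N` integers `α ∈ [-N, N]` satisfy it. Double count the pairs
`(α, q)`: each `α` to be counted carries more than `c₁ √N / log N` such primes, while
Chebyshev's bound `θ(x) ≤ x log 4` leaves only `O(√N / log N)` primes in `(√N/2, √N]`.
Hence there are `O(√N / c₁)` such `α`.
-/

open Finset Real

theorem sq_dvd_sub_of_sq_dvd_pow_sub_pow {R : Type*} [CommRing R] [IsDomain R] {p : R}
    (hp : Prime p) {a b : R} {n : ℕ} (hpn : ¬p ∣ n) (hpa : ¬p ∣ a) (hab : p ∣ b - a)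
    (h : p ^ 2 ∣ b ^ n - a ^ n) : p ^ 2 ∣ b - a := by
  obtain ⟨t, ht⟩ := hab
  obtain rfl : b = a + p * t := by rw [← ht]; ring
  -- `(a + p t) ^ n ≡ a ^ n + n a ^ (n - 1) p t` modulo `p ^ 2`
  have hlin : p * p ∣ p * (a ^ (n - 1) * t * n) := by
    have := h.sub ((pow_dvd_pow_of_dvd (dvd_mul_right p t) 2).trans
      (sq_dvd_add_pow_sub_sub (p * t) a n))
    rwa [show (a + p * t) ^ n - a ^ n - ((a + p * t) ^ n - a ^ (n - 1) * (p * t) * n - a ^ n)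
      = p * (a ^ (n - 1) * t * n) by ring, pow_two] at this
  have hpt : p ∣ t := by
    rcases hp.dvd_or_dvd ((mul_dvd_mul_iff_left hp.ne_zero).mp hlin) with h | h
    · exact (hp.dvd_or_dvd h).resolve_left fun h' ↦ hpa (hp.dvd_of_dvd_pow h')
    · exact absurd h hpn
  rw [add_sub_cancel_left, pow_two]
  exact mul_dvd_mul_left p hpt

theorem Int.card_le_mul_of_modEq_imp_modEq {s : Finset ℤ} {a : ℤ} {q m k : ℕ} (hq : 0 < q)
    (hm : 0 < m) (hs : s ⊆ Ico a (a + k * m))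
    (hlift : ∀ x ∈ s, ∀ y ∈ s, x ≡ y [ZMOD q] → x ≡ y [ZMOD m]) : #s ≤ q * k := by
  have hcard : #(Ico (0 : ℤ) q ×ˢ Ico (0 : ℤ) k) = q * k := by simp
  rw [← hcard]
  -- `x` is determined by its residue mod `q` and by the block of length `m` containing it
  refine card_le_card_of_injOn (fun x ↦ (x % q, (x - a) / m)) (fun x hx ↦ ?_) ?_
  · have hx := mem_Ico.mp (hs hx)
    simp only [coe_product, coe_Ico, Set.mem_prod, Set.mem_Ico]
    refine ⟨⟨Int.emod_nonneg _ (by omega), Int.emod_lt_of_pos _ (by omega)⟩,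
      Int.ediv_nonneg (by omega) (by omega), ?_⟩
    rw [Int.ediv_lt_iff_lt_mul (by omega)]
    linarith
  · intro x hx y hy hxy
    simp only [Prod.mk.injEq] at hxy
    have hxym : x - a ≡ y - a [ZMOD m] := (hlift x hx y hy hxy.1).sub_right a
    have hx := Int.emod_add_mul_ediv (x - a) m
    have hy := Int.emod_add_mul_ediv (y - a) m
    rw [hxym, hxy.2] at hx
    linarith

theorem card_filter_sq_dvd_pow_sub_one_le {q : ℕ} (hq : q.Prime) {s : Finset ℤ} {a : ℤ}
    {k : ℕ} (hs : s ⊆ Ico a (a + k * q ^ 2)) :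
    #{α ∈ s | (q : ℤ) ^ 2 ∣ α ^ (q - 1) - 1} ≤ q * k := by
  have hq' : Prime (q : ℤ) := Nat.prime_iff_prime_int.mp hq
  have hq_not_dvd_pred : ¬(q : ℤ) ∣ ((q - 1 : ℕ) : ℤ) := by
    rw [Int.natCast_dvd_natCast]
    exact Nat.not_dvd_of_pos_of_lt (by have := hq.two_le; omega) (by have := hq.pos; omega)
  have hq_not_dvd {α : ℤ} (hα : (q : ℤ) ^ 2 ∣ α ^ (q - 1) - 1) : ¬(q : ℤ) ∣ α := fun h ↦
    have hpow : (q : ℤ) ∣ α ^ (q - 1) := dvd_pow h (by have := hq.two_le; omega)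
    hq'.not_dvd_one <| (dvd_sub_right hpow).mp ((dvd_pow_self _ two_ne_zero).trans hα)
  refine Int.card_le_mul_of_modEq_imp_modEq hq.pos (pow_pos hq.pos 2)
    ((filter_subset _ _).trans (by exact_mod_cast hs)) fun x hx y hy hxy ↦ ?_
  rw [mem_filter] at hx hy
  rw [Int.modEq_iff_dvd] at hxy ⊢
  push_cast
  refine sq_dvd_sub_of_sq_dvd_pow_sub_pow hq' hq_not_dvd_pred (hq_not_dvd hx.2) hxy ?_
  simpa using hy.2.sub hx.2

noncomputable def primesIocHalf (x : ℝ) : Finset ℕ := {p ∈ Nat.primesLE ⌊x⌋₊ | x / 2 < p}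

theorem mem_primesIocHalf {x : ℝ} (hx : 0 ≤ x) {p : ℕ} :
    p ∈ primesIocHalf x ↔ p.Prime ∧ x / 2 < p ∧ (p : ℝ) ≤ x := by
  simp only [primesIocHalf, mem_filter, Nat.primesLE, Nat.mem_primesBelow, Nat.lt_succ_iff,
    Nat.le_floor_iff hx]
  tauto

theorem card_primesIocHalf_mul_log_le {x : ℝ} (hx : 0 < x) :
    #(primesIocHalf x) * log (x / 2) ≤ log 4 * x := calc
  #(primesIocHalf x) * log (x / 2) ≤ ∑ p ∈ primesIocHalf x, log p := by
    rw [← nsmul_eq_mul]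
    refine card_nsmul_le_sum _ _ _ fun p hp ↦ log_le_log (by positivity) ?_
    exact ((mem_primesIocHalf hx.le).mp hp).2.1.le
  _ ≤ ∑ p ∈ Nat.primesLE ⌊x⌋₊, log p :=
    sum_le_sum_of_subset_of_nonneg (filter_subset _ _) fun p _ _ ↦ log_natCast_nonneg p
  _ = Chebyshev.theta x := (Chebyshev.theta_eq_sum_primesLE x).symm
  _ ≤ log 4 * x := Chebyshev.theta_le_log4_mul_x hx.le

theorem card_primesIocHalf_sqrt_mul_log_le {N : ℕ} (hN : 16 ≤ N) :
    #(primesIocHalf √N) * log N ≤ 6 * √N := by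
  have hN0 : (0 : ℝ) < N := by positivity
  -- `log (√N / 2) = log N / 2 - log 2 ≥ log N / 4` as soon as `N ≥ 16 = 2 ^ 4`
  have hlog : log N / 4 ≤ log (√N / 2) := by
    have h16 : 4 * log 2 ≤ log N := by
      rw [← log_rpow two_pos]
      exact log_le_log (by norm_num) (by norm_num; exact_mod_cast hN)
    rw [log_div (by positivity) two_ne_zero, log_sqrt hN0.le]
    linarith
  have hlog4 : log 4 < 1.5 := by
    rw [show (4 : ℝ) = 2 ^ 2 by norm_num, log_pow]
    have := log_two_lt_d9
    push_cast
    linarith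
  have := card_primesIocHalf_mul_log_le (sqrt_pos.mpr hN0)
  nlinarith [sqrt_nonneg N, Nat.cast_nonneg (α := ℝ) #(primesIocHalf √N)]

theorem card_filter_sq_dvd_le_of_mem_primesIocHalf {N q : ℕ} (hq : q ∈ primesIocHalf √N) :
    (#{α ∈ Icc (-N : ℤ) N | (q : ℤ) ^ 2 ∣ α ^ (q - 1) - 1} : ℝ) ≤ 8 * √N := by
  obtain ⟨hqp, hlo, hhi⟩ := (mem_primesIocHalf (sqrt_nonneg _)).mp hq
  have hNq : (N : ℤ) < 4 * q ^ 2 := by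
    have : (N : ℝ) < (2 * q) ^ 2 := by
      rw [← sq_sqrt N.cast_nonneg]
      gcongr
      linarith
    exact_mod_cast (this.trans_eq (by ring) : (N : ℝ) < 4 * q ^ 2)
  have hsub : Icc (-N : ℤ) N ⊆ Ico (-N) (-N + (8 : ℕ) * q ^ 2) := by
    intro x hx
    rw [mem_Icc] at hx
    rw [mem_Ico]
    push_cast
    constructor <;> omega
  have := card_filter_sq_dvd_pow_sub_one_le hqp hsub
  calc (#{α ∈ Icc (-N : ℤ) N | (q : ℤ) ^ 2 ∣ α ^ (q - 1) - 1} : ℝ) ≤ q * 8 := by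
        exact_mod_cast this
    _ ≤ 8 * √N := by linarith

theorem ncard_le_of_many_wieferich_primes {N : ℕ} (hN : 16 ≤ N) {c : ℝ} (hc : 0 < c)
    {S : Set ℤ} (hS : S ⊆ Set.Icc (-N) N) (Q : ℤ → Set ℕ) (hQ : ∀ α, Q α ⊆ primesIocHalf √N)
    (hmany : ∀ α ∈ S, c * √N / log N < (Q α).ncard)
    (hdvd : ∀ α ∈ S, ∀ q ∈ Q α, (q : ℤ) ^ 2 ∣ α ^ (q - 1) - 1) :
    (S.ncard : ℝ) ≤ 48 / c * √N := by
  classical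
  have hfin : S.Finite := (Set.finite_Icc _ _).subset hS
  rw [Set.ncard_eq_toFinset_card S hfin]
  have hdouble : #hfin.toFinset • (c * √N / log N) ≤ #(primesIocHalf √N) • (8 * √N) := by
    refine card_nsmul_le_card_nsmul (fun α q ↦ q ∈ Q α) (fun α hα ↦ ?_) fun q hq ↦ ?_
    · rw [Set.Finite.mem_toFinset] at hα
      refine (hmany α hα).le.trans_eq ?_
      rw [← Set.ncard_coe_finset]
      congr 2
      ext q
      simpa [bipartiteAbove] using fun h ↦ hQ α h
    · refine le_trans ?_ (card_filter_sq_dvd_le_of_mem_primesIocHalf hq)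
      gcongr
      intro α hα
      simp only [bipartiteBelow, mem_filter, Set.Finite.mem_toFinset] at hα
      exact mem_filter.mpr ⟨mem_Icc.mpr (hS hα.1), hdvd α hα.1 q hα.2⟩
  have hsqrt : 0 < √N := sqrt_pos.mpr (by positivity)
  have hlog : 0 < log N := log_pos (by norm_cast; omega)
  have hP := card_primesIocHalf_sqrt_mul_log_le hN
  rw [nsmul_eq_mul, nsmul_eq_mul] at hdouble
  calc (#hfin.toFinset : ℝ) = #hfin.toFinset * (c * √N / log N) * (log N / (c * √N)) := by
        field_simp
    _ ≤ #(primesIocHalf √N) * (8 * √N) * (log N / (c * √N)) := by gcongr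
    _ = #(primesIocHalf √N) * log N * 8 / c := by field_simp
    _ ≤ 6 * √N * 8 / c := by gcongr
    _ = 48 / c * √N := by ring

theorem primRootSet_subset_primesIocHalf (N : ℕ) (β α : ℤ) :
    primRootSet N β α ⊆ primesIocHalf √N :=
  fun _ hq ↦ (mem_primesIocHalf (sqrt_nonneg _)).mpr ⟨hq.1, hq.2.1, hq.2.2.1⟩

/-- For every `c₁ > 0` there is a `C > 0` such that for all sufficiently large `N` and every
integer `β` with `1 < |β| ≤ N`: the number of integers `α ∈ [-N, N]` with
`#𝒫(α) > c₁·√N/log N` but `v_q(α^{q-1} - 1) > 1` for every `q ∈ 𝒫(α)` is at most `C·N^{1/2}`.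
(The condition `v_q(α^{q-1}-1) > 1`, with the convention `v_q(0) = ∞`, is expressed by the
disjunction with `α^{q-1} - 1 = 0`.) -/
theorem stmt14 (c₁ : ℝ) (hc₁ : 0 < c₁) : ∃ C : ℝ, 0 < C ∧ ∀ᶠ N : ℕ in Filter.atTop,
    ∀ β : ℤ, 1 < |β| → |β| ≤ (N : ℤ) →
    ({α : ℤ | |α| ≤ (N : ℤ) ∧
        c₁ * Real.sqrt N / Real.log N < ((primRootSet N β α).ncard : ℝ) ∧
        ∀ q ∈ primRootSet N β α,
          α ^ (q - 1) - 1 = 0 ∨ 1 < padicValInt q (α ^ (q - 1) - 1)}.ncard : ℝ)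
      ≤ C * Real.sqrt N := by
  refine ⟨48 / c₁, by positivity, Filter.eventually_atTop.2 ⟨16, fun N hN β _ _ ↦ ?_⟩⟩
  refine ncard_le_of_many_wieferich_primes hN hc₁ (fun α hα ↦ abs_le.mp hα.1) (primRootSet N β)
    (primRootSet_subset_primesIocHalf N β) (fun α hα ↦ hα.2.1) fun α hα q hq ↦ ?_
  have : Fact q.Prime := ⟨hq.1⟩
  exact (padicValInt_dvd_iff 2 _).mpr (hα.2.2 q hq)
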